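/- arXiv:2312.08008 — 2 statements merged into one kernel-verified Lean document; each statement's English description precedes it below -/
import Mathlib

section
/- For any vector R in R^n and η > 0, the normalization factor x of the Tsallis smoothing, i.e., the unique real x > max_i R_i such that sum_i 4/(η(R_i - x))² = 1, satisfies 2/η ≤ x - max_i R_i ≤ 2√n/η. -/
/-! Every weight is at most the weight `4 / (η (x - M))²` of a maximal coordinate, which occurs
among them. Hence `4 / (η (x - M))² ≤ 1 ≤ n · 4 / (η (x - M))²`, and solving these two
inequalities for `x - M` gives the bounds. -/

lemma div_sq_mul_sub_le_of_le {c η a M x : ℝ} (hc : 0 ≤ c) (hη : η ≠ 0) (ha : a ≤ M)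
    (hx : M < x) : c / (η * (a - x)) ^ 2 ≤ c / (η * (x - M)) ^ 2 := by
  have hsq : (x - M) ^ 2 ≤ (x - a) ^ 2 := pow_le_pow_left₀ (sub_nonneg.2 hx.le) (by linarith) 2
  refine div_le_div_of_nonneg_left hc (by have := sub_pos.2 hx; positivity) ?_
  calc (η * (x - M)) ^ 2 = η ^ 2 * (x - M) ^ 2 := by ring
    _ ≤ η ^ 2 * (x - a) ^ 2 := by gcongr
    _ = (η * (a - x)) ^ 2 := by ring

lemma two_div_le_of_four_div_sq_le_one {η d : ℝ} (hη : 0 < η) (hd : 0 < d)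
    (h : 4 / (η * d) ^ 2 ≤ 1) : 2 / η ≤ d := by
  have hηd : 0 < η * d := mul_pos hη hd
  have hsq : (2 : ℝ) ^ 2 ≤ (η * d) ^ 2 := by
    rw [div_le_one (by positivity)] at h
    linarith
  rw [div_le_iff₀ hη, mul_comm]
  exact (pow_le_pow_iff_left₀ zero_le_two hηd.le two_ne_zero).1 hsq

lemma le_two_mul_sqrt_div_of_one_le_mul {η d k : ℝ} (hη : 0 < η) (hd : 0 < d) (hk : 0 ≤ k)
    (h : 1 ≤ k * (4 / (η * d) ^ 2)) : d ≤ 2 * √k / η := by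
  have hηd : 0 < η * d := mul_pos hη hd
  have hsq : (η * d) ^ 2 ≤ (2 * √k) ^ 2 := by
    rw [mul_div_assoc', le_div_iff₀ (by positivity)] at h
    rw [mul_pow 2, Real.sq_sqrt hk]
    linarith
  rw [le_div_iff₀ hη, mul_comm]
  exact (pow_le_pow_iff_left₀ hηd.le (by positivity) two_ne_zero).1 hsq

/-- For R ∈ ℝⁿ and η > 0, the Tsallis-smoothing normalization factor x, i.e. the real
number x > max_i R i with ∑ i, 4/(η(R i - x))² = 1, satisfies
2/η ≤ x - max_i R i ≤ 2√n/η. -/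
theorem tsallis_normalization_factor_bound (n : ℕ) (R : Fin n → ℝ) (η M x : ℝ)
    (hη : 0 < η)
    (hM : IsGreatest (Set.range R) M)
    (hx : M < x)
    (hsum : ∑ i, 4 / (η * (R i - x)) ^ 2 = 1) :
    2 / η ≤ x - M ∧ x - M ≤ 2 * Real.sqrt n / η := by
  obtain ⟨⟨i₀, hi₀⟩, hR⟩ := hM
  have hd : 0 < x - M := sub_pos.2 hx
  have hweight_le : ∀ i, 4 / (η * (R i - x)) ^ 2 ≤ 4 / (η * (x - M)) ^ 2 := fun i =>
    div_sq_mul_sub_le_of_le zero_le_four hη.ne' (hR ⟨i, rfl⟩) hx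
  constructor
  · refine two_div_le_of_four_div_sq_le_one hη hd ?_
    calc 4 / (η * (x - M)) ^ 2 = 4 / (η * (R i₀ - x)) ^ 2 := by rw [hi₀, ← neg_sub, mul_neg, neg_sq]
      _ ≤ ∑ i, 4 / (η * (R i - x)) ^ 2 :=
        Finset.single_le_sum (f := fun i => 4 / (η * (R i - x)) ^ 2) (fun i _ => by positivity)
          (Finset.mem_univ i₀)
      _ = 1 := hsum
  · refine le_two_mul_sqrt_div_of_one_le_mul hη hd n.cast_nonneg ?_
    calc 1 = ∑ i, 4 / (η * (R i - x)) ^ 2 := hsum.symm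
      _ ≤ ∑ _i : Fin n, 4 / (η * (x - M)) ^ 2 := Finset.sum_le_sum fun i _ => hweight_le i
      _ = n * (4 / (η * (x - M)) ^ 2) := by rw [Finset.sum_const, Finset.card_univ,
          Fintype.card_fin, nsmul_eq_mul]
end

section
/- The Tsallis smoothing map σ_η : R^n → Δ^n is Lipschitz with respect to the Euclidean norm with constant 2√2 · η · n: for all R, R' ∈ R^n, ‖σ_η(R) - σ_η(R')‖₂ ≤ 2√2 · η · n · ‖R - R'‖₂. -/
/-!
Write `a = x - R`, `b = x' - R'`. A weight `4 / (η a)²` is at most `1`, so `η aᵢ ≥ 2`, and on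
`[2/η, ∞)` the map `t ↦ 4 / (η t)²` has derivative bounded by `η`; hence
`|σᵢ - σ'ᵢ| ≤ η |dᵢ - δ|` with `d = R - R'`, `δ = x - x'`. Both weight vectors sum to `1` and
the weights are increasing in `R - x` on the negative axis, so `δ` lies between `min d` and
`max d`, giving `|dᵢ - δ| ≤ 2 ‖d‖_∞`. Thus `‖σ - σ'‖_∞ ≤ 2η ‖d‖₂`, and passing to the Euclidean
norm costs a factor `√n ≤ √2 n`.
-/

open Finset Real

section

variable {ι : Type*} [Fintype ι]

theorem abs_le_sqrt_sum_sq (d : ι → ℝ) (i : ι) : |d i| ≤ √(∑ j, d j ^ 2) :=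
  Real.abs_le_sqrt <| single_le_sum (f := fun j => d j ^ 2) (fun _ _ => sq_nonneg _) (mem_univ i)

theorem sqrt_sum_sq_le_sqrt_card_mul {d : ι → ℝ} {C : ℝ} (hC : 0 ≤ C) (h : ∀ i, |d i| ≤ C) :
    √(∑ i, d i ^ 2) ≤ √(Fintype.card ι) * C := by
  have hsum : ∑ i, d i ^ 2 ≤ Fintype.card ι * C ^ 2 := by
    simpa using sum_le_card_nsmul univ (fun i => d i ^ 2) (C ^ 2) fun i _ => by
      simpa only [sq_abs] using pow_le_pow_left₀ (abs_nonneg _) (h i) 2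
  calc √(∑ i, d i ^ 2) ≤ √(Fintype.card ι * C ^ 2) := Real.sqrt_le_sqrt hsum
    _ = √(Fintype.card ι) * C := by rw [Real.sqrt_mul (Nat.cast_nonneg _), Real.sqrt_sq hC]

theorem abs_sub_le_two_mul_sqrt_sum_sq {d : ι → ℝ} {δ : ℝ} (hlo : ∃ j, d j ≤ δ)
    (hhi : ∃ k, δ ≤ d k) (i : ι) : |d i - δ| ≤ 2 * √(∑ j, d j ^ 2) := by
  obtain ⟨j, hj⟩ := hlo
  obtain ⟨k, hk⟩ := hhi
  obtain ⟨hi₁, hi₂⟩ := abs_le.mp (abs_le_sqrt_sum_sq d i)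
  obtain ⟨hj₁, -⟩ := abs_le.mp (abs_le_sqrt_sum_sq d j)
  obtain ⟨-, hk₂⟩ := abs_le.mp (abs_le_sqrt_sum_sq d k)
  rw [abs_le]
  constructor <;> linarith

theorem exists_le_of_sum_comp_le [Nonempty ι] {f : ℝ → ℝ} {s : Set ℝ} (hf : StrictMonoOn f s)
    {a b : ι → ℝ} (ha : ∀ i, a i ∈ s) (hb : ∀ i, b i ∈ s)
    (h : ∑ i, f (a i) ≤ ∑ i, f (b i)) : ∃ i, a i ≤ b i := by
  obtain ⟨i, -, hi⟩ := exists_le_of_sum_le univ_nonempty h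
  exact ⟨i, (hf.le_iff_le (ha i) (hb i)).mp hi⟩

end

theorem sqrt_natCast_le_sqrt_two_mul (n : ℕ) : √(n : ℝ) ≤ √2 * n := by
  have h : (n : ℝ) ≤ 2 * n ^ 2 := by
    rcases n.eq_zero_or_pos with rfl | hn
    · simp
    · have : (1 : ℝ) ≤ n := by exact_mod_cast hn
      nlinarith
  calc √(n : ℝ) ≤ √(2 * n ^ 2) := Real.sqrt_le_sqrt h
    _ = √2 * n := by rw [Real.sqrt_mul zero_le_two, Real.sqrt_sq (Nat.cast_nonneg n)]

section

variable {η : ℝ}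

theorem strictMonoOn_four_div_mul_sq (hη : 0 < η) :
    StrictMonoOn (fun t : ℝ => 4 / (η * t) ^ 2) (Set.Iio 0) := by
  intro s hs t ht hst
  have hηs : η * s < η * t := mul_lt_mul_of_pos_left hst hη
  have hηt : η * t < 0 := mul_neg_of_pos_of_neg hη ht
  show 4 / (η * s) ^ 2 < 4 / (η * t) ^ 2
  apply div_lt_div_of_pos_left four_pos (sq_pos_of_neg hηt)
  nlinarith [mul_pos_of_neg_of_neg (sub_neg.mpr hηs) (add_neg (hηs.trans hηt) hηt)]

theorem two_le_abs_mul_sub_of_sum_eq_one {ι : Type*} [Fintype ι] (hη : η ≠ 0) {r : ι → ℝ}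
    {y : ℝ} (hy : ∀ i, r i ≠ y) (hsum : ∑ i, 4 / (η * (r i - y)) ^ 2 = 1) (i : ι) :
    2 ≤ |η * (r i - y)| := by
  have hi : 4 / (η * (r i - y)) ^ 2 ≤ 1 :=
    hsum ▸ single_le_sum (f := fun i => 4 / (η * (r i - y)) ^ 2) (fun _ _ => by positivity)
      (mem_univ i)
  have : r i - y ≠ 0 := sub_ne_zero.mpr (hy i)
  rw [div_le_one (by positivity), ← sq_abs] at hi
  nlinarith [abs_nonneg (η * (r i - y))]

theorem abs_four_div_mul_sq_sub_le (hη : 0 < η) {a b : ℝ} (ha : 2 ≤ |η * a|)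
    (hb : 2 ≤ |η * b|) : |4 / (η * a) ^ 2 - 4 / (η * b) ^ 2| ≤ η * |a - b| := by
  rw [abs_mul, abs_of_pos hη] at ha hb
  have ha0 : 0 < |a| := by nlinarith [abs_nonneg a]
  have hb0 : 0 < |b| := by nlinarith [abs_nonneg b]
  have hp : |a|⁻¹ ≤ η / 2 := by
    rw [inv_le_comm₀ ha0 (by positivity), inv_div, div_le_iff₀ hη]; linarith
  have hq : |b|⁻¹ ≤ η / 2 := by
    rw [inv_le_comm₀ hb0 (by positivity), inv_div, div_le_iff₀ hη]; linarith
  have key : 4 / (η * a) ^ 2 - 4 / (η * b) ^ 2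
      = 4 / η ^ 2 * (|a|⁻¹ * |b|⁻¹ * (|a|⁻¹ + |b|⁻¹)) * (|b| - |a|) := by
    rw [mul_pow, mul_pow, ← sq_abs a, ← sq_abs b]
    field_simp
    ring
  calc |4 / (η * a) ^ 2 - 4 / (η * b) ^ 2|
      = 4 / η ^ 2 * (|a|⁻¹ * |b|⁻¹ * (|a|⁻¹ + |b|⁻¹)) * |(|b| - |a|)| := by
        rw [key, abs_mul, abs_of_nonneg (by positivity)]
    _ ≤ 4 / η ^ 2 * (η / 2 * (η / 2) * (η / 2 + η / 2)) * |a - b| := by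
        gcongr ?_ * ?_
        · gcongr
        · rw [abs_sub_comm]
          exact abs_abs_sub_abs_le_abs_sub a b
    _ = η * |a - b| := by field_simp; ring

end

/-- The Tsallis smoothing map σ_η, given componentwise by σ_η(R)_i = 4/(η(R i - x))²
with x > max R the normalization factor (∑ i, 4/(η(R i - x))² = 1), is Lipschitz w.r.t.
the Euclidean norm with constant 2√2 η n. -/
theorem tsallis_smoothing_lipschitz (n : ℕ) (η : ℝ) (hη : 0 < η)
    (R R' : Fin n → ℝ) (x x' : ℝ)
    (hx : ∀ i, R i < x) (hx' : ∀ i, R' i < x')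
    (hs : ∑ i, 4 / (η * (R i - x)) ^ 2 = 1)
    (hs' : ∑ i, 4 / (η * (R' i - x')) ^ 2 = 1) :
    Real.sqrt (∑ i, (4 / (η * (R i - x)) ^ 2 - 4 / (η * (R' i - x')) ^ 2) ^ 2)
      ≤ 2 * Real.sqrt 2 * η * n * Real.sqrt (∑ i, (R i - R' i) ^ 2) := by
  have : Nonempty (Fin n) := by
    refine Fin.pos_iff_nonempty.mp (Nat.pos_of_ne_zero ?_)
    rintro rfl
    simp at hs
  have hneg : ∀ i, R i - x ∈ Set.Iio 0 := fun i => sub_neg.mpr (hx i)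
  have hneg' : ∀ i, R' i - x' ∈ Set.Iio 0 := fun i => sub_neg.mpr (hx' i)
  have hmono := strictMonoOn_four_div_mul_sq hη
  obtain ⟨j, hj⟩ := exists_le_of_sum_comp_le hmono hneg hneg' (hs.trans hs'.symm).le
  obtain ⟨k, hk⟩ := exists_le_of_sum_comp_le hmono hneg' hneg (hs'.trans hs.symm).le
  have hcoord (i : Fin n) : |4 / (η * (R i - x)) ^ 2 - 4 / (η * (R' i - x')) ^ 2|
      ≤ 2 * η * √(∑ i, (R i - R' i) ^ 2) :=
    calc _ ≤ η * |(R i - x) - (R' i - x')| :=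
          abs_four_div_mul_sq_sub_le hη
            (two_le_abs_mul_sub_of_sum_eq_one hη.ne' (fun i => (hx i).ne) hs i)
            (two_le_abs_mul_sub_of_sum_eq_one hη.ne' (fun i => (hx' i).ne) hs' i)
      _ = η * |(R i - R' i) - (x - x')| := by ring_nf
      _ ≤ η * (2 * √(∑ i, (R i - R' i) ^ 2)) := by
          gcongr
          exact abs_sub_le_two_mul_sqrt_sum_sq (d := fun i => R i - R' i) (δ := x - x')
            ⟨j, by linarith⟩ ⟨k, by linarith⟩ i
      _ = 2 * η * √(∑ i, (R i - R' i) ^ 2) := by ring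
  calc _ ≤ √(n : ℝ) * (2 * η * √(∑ i, (R i - R' i) ^ 2)) := by
        simpa using sqrt_sum_sq_le_sqrt_card_mul (by positivity) hcoord
    _ ≤ √2 * n * (2 * η * √(∑ i, (R i - R' i) ^ 2)) := by
        gcongr
        exact sqrt_natCast_le_sqrt_two_mul n
    _ = 2 * √2 * η * n * √(∑ i, (R i - R' i) ^ 2) := by ring
end
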